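/- Let U ⊆ ℂ be open and connected, let Φ : ℂ → ℂ be complex differentiable on U, let f : ℂ → ℂ be continuous, let ε > 0, and let γ : ℝ → ℂ satisfy: for every t ∈ [0, ε], γ(t) ∈ U and γ has derivative f(γ(t)) at t. Assume f(γ(0)) ≠ 0 and Φ(γ(t)) = γ(t) for every t ∈ [0, ε]. Then Φ(z) = z for every z ∈ U. -/
import Mathlib


/-- Identity theorem along a trajectory arc: if `Φ` is
holomorphic on an open connected set `U`, `γ` solves `γ' = f ∘ γ` on `[0, ε]`
with values in `U`, `f (γ 0) ≠ 0`, and `Φ` fixes every point `γ t` for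
`t ∈ [0, ε]`, then `Φ` is the identity on `U`. -/
theorem fix_arc_implies_identity
    (U : Set ℂ) (hUopen : IsOpen U) (hUconn : IsPreconnected U)
    (Φ : ℂ → ℂ) (hΦ : DifferentiableOn ℂ Φ U)
    (f : ℂ → ℂ) (hf : Continuous f)
    (ε : ℝ) (hε : 0 < ε)
    (γ : ℝ → ℂ)
    (hmem : ∀ t ∈ Set.Icc (0:ℝ) ε, γ t ∈ U)
    (hγ : ∀ t ∈ Set.Icc (0:ℝ) ε, HasDerivAt γ (f (γ t)) t)
    (hne : f (γ 0) ≠ 0)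
    (hfix : ∀ t ∈ Set.Icc (0:ℝ) ε, Φ (γ t) = γ t) :
    ∀ z ∈ U, Φ z = z := by
  have h0 : (0:ℝ) ∈ Set.Icc (0:ℝ) ε := ⟨le_refl _, hε.le⟩
  -- g := Φ - id, analytic on U
  have hg : AnalyticOnNhd ℂ (fun z => Φ z - z) U :=
    (hΦ.sub differentiableOn_id).analyticOnNhd hUopen
  -- slope tends to f (γ 0) ≠ 0
  have hslope : Filter.Tendsto (slope γ 0) (nhdsWithin 0 {(0:ℝ)}ᶜ) (nhds (f (γ 0))) :=
    hasDerivAt_iff_tendsto_slope.mp (hγ 0 h0)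
  have hslope' : ∀ᶠ t in nhdsWithin 0 {(0:ℝ)}ᶜ, slope γ 0 t ≠ 0 :=
    hslope.eventually_ne hne
  have hle : nhdsWithin (0:ℝ) (Set.Ioi 0) ≤ nhdsWithin 0 {(0:ℝ)}ᶜ :=
    nhdsWithin_mono _ (fun x hx => ne_of_gt hx)
  have hne' : ∀ᶠ t in nhdsWithin (0:ℝ) (Set.Ioi 0), γ t ≠ γ 0 := by
    filter_upwards [hle hslope'] with t ht
    intro h
    apply ht
    simp [slope, h]
  -- γ tends to γ 0 within the punctured neighborhood
  have hcont : Filter.Tendsto γ (nhdsWithin (0:ℝ) (Set.Ioi 0)) (nhds (γ 0)) :=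
    ((hγ 0 h0).continuousAt.tendsto).mono_left nhdsWithin_le_nhds
  have htγ : Filter.Tendsto γ (nhdsWithin (0:ℝ) (Set.Ioi 0))
      (nhdsWithin (γ 0) {γ 0}ᶜ) := by
    rw [tendsto_nhdsWithin_iff]
    exact ⟨hcont, hne'⟩
  -- eventually t ∈ Icc 0 ε
  have hIcc : ∀ᶠ t in nhdsWithin (0:ℝ) (Set.Ioi 0), t ∈ Set.Icc (0:ℝ) ε := by
    have : ∀ᶠ t in nhdsWithin (0:ℝ) (Set.Ioi 0), t ∈ Set.Ioo (0:ℝ) ε := by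
      apply Filter.eventually_iff_exists_mem.mpr
      exact ⟨Set.Ioi 0 ∩ Set.Iio ε,
        inter_mem_nhdsWithin _ (Iio_mem_nhds hε), fun y hy => ⟨hy.1, hy.2⟩⟩
    filter_upwards [this] with t ht
    exact ⟨ht.1.le, ht.2.le⟩
  have hfreq : ∃ᶠ z in nhdsWithin (γ 0) {γ 0}ᶜ, (fun z => Φ z - z) z = 0 := by
    apply htγ.frequently
    apply Filter.Eventually.frequently
    filter_upwards [hIcc] with t ht
    simp [hfix t ht]
  have := hg.eqOn_zero_of_preconnected_of_frequently_eq_zero hUconn (hmem 0 h0) hfreq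
  intro z hz
  have hz' := this hz
  simpa [sub_eq_zero] using hz'
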